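/- arXiv:1405.4054 — 2 statements merged into one kernel-verified Lean document; each statement's English description precedes it below -/
import Mathlib

section
/- Under the optimal solutions, the OCKM distortion is at most the ECKM distortion with the same parameters: for every positive integer C, f_ock(M, K, C) ≤ f_eck(M, K, C). -/
open Matrix

/-- A vector in `ℝ^K` is one-hot if exactly one entry equals 1 and all others are 0. -/
def IsOneHot {K : ℕ} (b : Fin K → ℝ) : Prop :=
  ∃ k : Fin K, b k = 1 ∧ ∀ k' : Fin K, k' ≠ k → b k' = 0

/-- Squared Euclidean distance. -/
noncomputable def sqDist {P : ℕ} (x y : Fin P → ℝ) : ℝ := ∑ p, (x p - y p) ^ 2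

/-- Concatenation of `m` subvectors of dimension `S` into a vector of dimension `P = m * S`. -/
noncomputable def concatV {m S P : ℕ} (h : m * S = P) (v : Fin m → Fin S → ℝ) :
    Fin P → ℝ :=
  fun p =>
    v (finProdFinEquiv.symm (Fin.cast h.symm p)).1
      (finProdFinEquiv.symm (Fin.cast h.symm p)).2

/-- The extended Cartesian K-means distortion `f_eck(m, K, C)`: the infimum over orthogonal
`R`, sub codebooks `D^j ∈ ℝ^{(P/m) × K}` and vectors `b_i^j` with nonnegative integer entries
summing to `C` of `∑ i ‖x_i - R v_i‖²` where `v_i` concatenates the `D^j b_i^j`. -/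
noncomputable def fECK (N P : ℕ) (x : Fin N → Fin P → ℝ) (m K C : ℕ) (hm : m ∣ P) : ℝ :=
  sInf { t : ℝ |
    ∃ (R : Matrix (Fin P) (Fin P) ℝ)
      (D : Fin m → Matrix (Fin (P / m)) (Fin K) ℝ)
      (b : Fin N → Fin m → Fin K → ℕ),
      Rᵀ * R = 1 ∧ (∀ i j, ∑ k, b i j k = C) ∧
      t = ∑ i, sqDist (x i)
            (R *ᵥ concatV (Nat.mul_div_cancel' hm)
              (fun j => D j *ᵥ fun k => ((b i j k : ℝ)))) }

/-- The optimized Cartesian K-means distortion `f_ock(m, K, C)`: the infimum over orthogonal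
`R`, sub codebooks `D^{j,c} ∈ ℝ^{(P/m) × K}` and one-hot vectors `b_i^{j,c}` of
`∑ i ‖x_i - R v_i‖²` where `v_i` concatenates the `∑_c D^{j,c} b_i^{j,c}`. -/
noncomputable def fOCK (N P : ℕ) (x : Fin N → Fin P → ℝ) (m K C : ℕ) (hm : m ∣ P) : ℝ :=
  sInf { t : ℝ |
    ∃ (R : Matrix (Fin P) (Fin P) ℝ)
      (D : Fin m → Fin C → Matrix (Fin (P / m)) (Fin K) ℝ)
      (b : Fin N → Fin m → Fin C → Fin K → ℝ),
      Rᵀ * R = 1 ∧ (∀ i j c, IsOneHot (b i j c)) ∧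
      t = ∑ i, sqDist (x i)
            (R *ᵥ concatV (Nat.mul_div_cancel' hm) (fun j => ∑ c, D j c *ᵥ b i j c)) }

lemma exists_assign {K C : ℕ} (b : Fin K → ℕ) (hb : ∑ k, b k = C) :
    ∃ g : Fin C → Fin K, ∀ k' : Fin K,
      (∑ c : Fin C, (if g c = k' then (1:ℝ) else 0)) = (b k' : ℝ) := by
  have hcard : Fintype.card (Σ k : Fin K, Fin (b k)) = C := by
    simp [Fintype.card_sigma, hb]
  let e : (Σ k : Fin K, Fin (b k)) ≃ Fin C := Fintype.equivFinOfCardEq hcard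
  refine ⟨fun c => (e.symm c).1, fun k' => ?_⟩
  rw [← e.sum_comp (fun c => if (e.symm c).1 = k' then (1:ℝ) else 0)]
  simp only [Equiv.symm_apply_apply]
  rw [← Finset.univ_sigma_univ, Finset.sum_sigma]
  simp [apply_ite Finset.card, Finset.sum_ite_eq', Finset.card_univ]

/-- Theorem 1, Eqn. (11): under optimal solutions, `f_ock(M, K, C) ≤ f_eck(M, K, C)`. -/
theorem ockm_le_eckm (N P K M C : ℕ) (hN : 0 < N) (hP : 0 < P) (hK : 0 < K)
    (hM : 0 < M) (hC : 0 < C) (hMP : M ∣ P) (x : Fin N → Fin P → ℝ) :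
    fOCK N P x M K C hMP ≤ fECK N P x M K C hMP := by
  apply csInf_le_csInf
  · refine ⟨0, fun t ht => ?_⟩
    obtain ⟨R, D, b, _, _, rfl⟩ := ht
    apply Finset.sum_nonneg
    intro i _
    apply Finset.sum_nonneg
    intro p _
    positivity
  · refine ⟨_, 1, fun _ => 0, fun _ _ k => if k = ⟨0, hK⟩ then C else 0, ?_, ?_, rfl⟩
    · simp
    · intro i j; simp
  · rintro t ⟨R, D, b, hR, hb, rfl⟩
    choose g hg using fun i j => exists_assign (b i j) (hb i j)
    refine ⟨R, fun j _ => D j,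
      fun i j c k => if g i j c = k then 1 else 0, hR, ?_, ?_⟩
    · intro i j c
      exact ⟨g i j c, by simp, fun k' hk' => by simp [Ne.symm hk']⟩
    · refine Finset.sum_congr rfl fun i _ => ?_
      have hv : (fun j => ∑ c : Fin C, D j *ᵥ fun k => if g i j c = k then (1:ℝ) else 0)
          = fun j => D j *ᵥ fun k => ((b i j k : ℝ)) := by
        funext j s
        simp only [Finset.sum_apply, Matrix.mulVec, dotProduct]
        rw [Finset.sum_comm]
        exact Finset.sum_congr rfl fun k _ => by rw [← Finset.mul_sum, hg i j k]
      simp only [hv]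
end

section
/- Under the same code length, the OCKM distortion is at most the CKM distortion: if C ≥ 1 and M is divisible by C, then f_ock(M/C, K, C) ≤ f_ck(M, K), where OCKM uses M' = M/C subspaces each of dimension C·(P/M). -/
open Matrix

/-- The Cartesian K-means distortion `f_ck(m, K)`: the infimum over orthogonal `R`,
sub codebooks `D^j ∈ ℝ^{(P/m) × K}` and one-hot vectors `b_i^j` of
`∑ i ‖x_i - R v_i‖²` where `v_i` concatenates the `D^j b_i^j`. -/
noncomputable def fCK (N P : ℕ) (x : Fin N → Fin P → ℝ) (m K : ℕ) (hm : m ∣ P) : ℝ :=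
  sInf { t : ℝ |
    ∃ (R : Matrix (Fin P) (Fin P) ℝ)
      (D : Fin m → Matrix (Fin (P / m)) (Fin K) ℝ)
      (b : Fin N → Fin m → Fin K → ℝ),
      Rᵀ * R = 1 ∧ (∀ i j, IsOneHot (b i j)) ∧
      t = ∑ i, sqDist (x i)
            (R *ᵥ concatV (Nat.mul_div_cancel' hm) (fun j => D j *ᵥ b i j)) }

/-! Merging every `C` consecutive CKM subspaces into one OCKM subspace of dimension `C * (P / M)`,
an OCKM code can reproduce any CKM code: the `c`-th sub codebook of a merged subspace is the CKM
sub codebook of its `c`-th part, zero-padded into that part's block of rows. So every CKM distortion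
is an OCKM distortion, and the infimum over the larger set is smaller. -/

lemma sqDist_nonneg {P : ℕ} (x y : Fin P → ℝ) : 0 ≤ sqDist x y :=
  Finset.sum_nonneg fun _ _ => sq_nonneg _

lemma isOneHot_single {K : ℕ} (k : Fin K) : IsOneHot (Pi.single k 1 : Fin K → ℝ) :=
  ⟨k, Pi.single_eq_same k 1, fun _ hk => Pi.single_eq_of_ne hk 1⟩

section Concat

variable {m S P : ℕ}

lemma concatV_sum {ι : Type*} (h : m * S = P) (s : Finset ι) (v : ι → Fin m → Fin S → ℝ) :
    concatV h (∑ c ∈ s, v c) = ∑ c ∈ s, concatV h (v c) := by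
  funext p
  simp only [concatV, Finset.sum_apply]

/-- The `P × K` matrix whose `c`-th block of rows is `D` and whose other rows vanish. -/
noncomputable def padBlock {K : ℕ} (h : m * S = P) (c : Fin m) (D : Matrix (Fin S) (Fin K) ℝ) :
    Matrix (Fin P) (Fin K) ℝ :=
  Matrix.of fun p k => concatV h (Pi.single c fun r => D r k) p

lemma padBlock_mulVec {K : ℕ} (h : m * S = P) (c : Fin m) (D : Matrix (Fin S) (Fin K) ℝ)
    (b : Fin K → ℝ) : padBlock h c D *ᵥ b = concatV h (Pi.single c (D *ᵥ b)) := by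
  funext p
  simp only [padBlock, concatV, mulVec, dotProduct, Matrix.of_apply, Pi.single_apply]
  split_ifs with hc
  · subst hc; rfl
  · simp

lemma sum_padBlock_mulVec {K : ℕ} (h : m * S = P) (D : Fin m → Matrix (Fin S) (Fin K) ℝ)
    (b : Fin m → Fin K → ℝ) :
    ∑ c, padBlock h c (D c) *ᵥ b c = concatV h fun c => D c *ᵥ b c := by
  simp only [padBlock_mulVec, ← concatV_sum, Finset.univ_sum_single]

end Concat

lemma concatV_concatV {a c s t m P : ℕ} (h₁ : a * t = P) (h₂ : c * s = t) (h₃ : m * s = P)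
    (hm : a * c = m) (v : Fin m → Fin s → ℝ) :
    concatV h₁ (fun j => concatV h₂ fun k => v (Fin.cast hm (finProdFinEquiv (j, k)))) =
      concatV h₃ v := by
  subst h₂ hm h₃
  funext p
  simp only [concatV, finProdFinEquiv_symm_apply]
  congr 1 <;> ext <;>
    simp only [Fin.val_cast, Fin.coe_divNat, Fin.coe_modNat, finProdFinEquiv_apply_val]
  · rw [mul_comm c s, Nat.mod_mul_right_div_self, ← Nat.div_div_eq_div_mul, Nat.mod_add_div]
  · exact Nat.mod_mul_left_mod _ _ _

lemma mul_div_eq_div_div_of_dvd {P M C : ℕ} (hMP : M ∣ P) (hCM : C ∣ M) :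
    C * (P / M) = P / (M / C) := by
  obtain ⟨r, rfl⟩ := hCM
  obtain ⟨q, rfl⟩ := hMP
  rcases Nat.eq_zero_or_pos C with rfl | hC
  · simp
  rcases Nat.eq_zero_or_pos r with rfl | hr
  · simp
  rw [Nat.mul_div_cancel_left _ hC, Nat.mul_div_cancel_left _ (Nat.mul_pos hC hr), mul_comm C r,
    mul_assoc, Nat.mul_div_cancel_left _ hr]

/-- The CKM subspace `C * j + c`, the `c`-th part of the merged OCKM subspace `j`. -/
def mergedIndex {M C : ℕ} (hCM : C ∣ M) (j : Fin (M / C)) (c : Fin C) : Fin M :=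
  Fin.cast (Nat.div_mul_cancel hCM) (finProdFinEquiv (j, c))

theorem ockm_le_ckm_same_code_length_general (N P K M C : ℕ) (hK : 0 < K)
    (hMP : M ∣ P) (hCM : C ∣ M) (x : Fin N → Fin P → ℝ) :
    fOCK N P x (M / C) K C ((Nat.div_dvd_of_dvd hCM).trans hMP) ≤ fCK N P x M K hMP := by
  have hblock := mul_div_eq_div_div_of_dvd hMP hCM
  have hmerged := (Nat.div_dvd_of_dvd hCM).trans hMP
  apply csInf_le_csInf
  · refine ⟨0, ?_⟩
    rintro _ ⟨-, -, -, -, -, rfl⟩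
    exact Finset.sum_nonneg fun _ _ => sqDist_nonneg _ _
  · exact ⟨_, 1, 0, fun _ _ => Pi.single ⟨0, hK⟩ 1, by simp, fun _ _ => isOneHot_single _, rfl⟩
  · rintro _ ⟨R, D, b, hR, hb, rfl⟩
    refine ⟨R, fun j c => padBlock hblock c (D (mergedIndex hCM j c)),
      fun i j c => b i (mergedIndex hCM j c), hR, fun i _ _ => hb i _, ?_⟩
    refine Finset.sum_congr rfl fun i _ => ?_
    rw [← concatV_concatV (Nat.mul_div_cancel' hmerged) hblock _ (Nat.div_mul_cancel hCM)]
    simp only [sum_padBlock_mulVec, mergedIndex]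

/-- Theorem 2, Eqn. (17): under the same code length, `f_ock(M/C, K, C) ≤ f_ck(M, K)`,
where OCKM uses `M' = M/C` subspaces each of dimension `C * (P/M)`. -/
theorem ockm_le_ckm_same_code_length (N P K M C : ℕ) (hN : 0 < N) (hP : 0 < P) (hK : 0 < K)
    (hM : 0 < M) (hC : 0 < C) (hMP : M ∣ P) (hCM : C ∣ M) (x : Fin N → Fin P → ℝ) :
    fOCK N P x (M / C) K C ((Nat.div_dvd_of_dvd hCM).trans hMP) ≤ fCK N P x M K hMP :=
  ockm_le_ckm_same_code_length_general N P K M C hK hMP hCM x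
end
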